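/- For every β > 0 and every s ∈ (-1/2, 1/2), the s-weighted time filter integrates to one half: ∫_ℝ g_s(t) dt = 1/2, where g_s(t) := (2/β)·cos(sπ)·cosh(2πt/β)/(cosh(4πt/β) + cos(2sπ)). -/

import Mathlib

open MeasureTheory Matrix
open scoped Kronecker ComplexOrder

noncomputable section

namespace QMS

attribute [local instance] Matrix.frobeniusNormedAddCommGroup Matrix.frobeniusNormedSpace

variable {m : Type*} [Fintype m] [DecidableEq m]

/-- Index type for an `n`-qubit system. -/
abbrev QIdx (n : ℕ) := Fin n → Fin 2

/-- The operator (spectral) norm of a matrix. -/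
def opNorm (M : Matrix m m ℂ) : ℝ := ‖Matrix.toEuclideanCLM (𝕜 := ℂ) M‖

/-- The squared Frobenius (Schatten-2) norm. -/
def frobNormSq (M : Matrix m m ℂ) : ℝ := ((Mᴴ * M).trace).re

/-- The trace (Schatten-1) norm. -/
def traceNorm (M : Matrix m m ℂ) : ℝ :=
  (((Matrix.posSemidef_conjTranspose_mul_self M).1.eigenvectorUnitary : Matrix m m ℂ) *
    Matrix.diagonal (((↑) : ℝ → ℂ) ∘ (√·) ∘ (Matrix.posSemidef_conjTranspose_mul_self M).1.eigenvalues) *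
    (star (Matrix.posSemidef_conjTranspose_mul_self M).1.eigenvectorUnitary : Matrix m m ℂ)).trace.re

/-- Functional calculus for Hermitian matrices (junk value `0` otherwise). -/
def matFun (f : ℝ → ℝ) (M : Matrix m m ℂ) : Matrix m m ℂ :=
  @dite _ (M.IsHermitian) (Classical.dec _)
    (fun h => (h.eigenvectorUnitary : Matrix m m ℂ) *
        Matrix.diagonal (fun i => (f (h.eigenvalues i) : ℂ)) *
        star (h.eigenvectorUnitary : Matrix m m ℂ))
    (fun _ => 0)

/-- Real matrix power via functional calculus. -/
def mpow (M : Matrix m m ℂ) (s : ℝ) : Matrix m m ℂ := matFun (fun x => x ^ s) M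

/-- Matrix logarithm via functional calculus. -/
def mlog (M : Matrix m m ℂ) : Matrix m m ℂ := matFun Real.log M

/-- Matrix square root via functional calculus. -/
def msqrt (M : Matrix m m ℂ) : Matrix m m ℂ := mpow M (1/2 : ℝ)

/-- The von Neumann entropy `S(σ) = -Tr[σ log σ]`. -/
def entropy (M : Matrix m m ℂ) : ℝ :=
  @dite _ (M.IsHermitian) (Classical.dec _)
    (fun h => -∑ i, h.eigenvalues i * Real.log (h.eigenvalues i)) (fun _ => 0)

/-- Matrix exponential. -/
def mexp (M : Matrix m m ℂ) : Matrix m m ℂ := NormedSpace.exp M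

/-- The Gibbs state `ρ = e^{-βH}/Tr[e^{-βH}]`. -/
def gibbs (H : Matrix m m ℂ) (β : ℝ) : Matrix m m ℂ :=
  ((mexp ((-(β : ℂ)) • H)).trace)⁻¹ • mexp ((-(β : ℂ)) • H)

/-- Heisenberg evolution `A(t) = e^{iHt} A e^{-iHt}`. -/
def heis (H A : Matrix m m ℂ) (t : ℝ) : Matrix m m ℂ :=
  mexp ((Complex.I * (t : ℂ)) • H) * A * mexp ((-(Complex.I * (t : ℂ))) • H)

/-- The Gaussian time filter `f_ς(t)`. -/
def fG (ς t : ℝ) : ℝ := Real.exp (-(ς^2 * t^2)) * Real.sqrt (ς * Real.sqrt (2 / Real.pi))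

/-- The Fourier transform `f̂_ς(ω)` of the Gaussian filter. -/
def fGhat (ς ω : ℝ) : ℝ :=
  Real.exp (-(ω^2 / (4 * ς^2))) / Real.sqrt (ς * Real.sqrt (2 * Real.pi))

/-- The operator Fourier transform `Â(ω)`. -/
def oft (H : Matrix m m ℂ) (ς : ℝ) (A : Matrix m m ℂ) (ω : ℝ) : Matrix m m ℂ :=
  (1 / Real.sqrt (2 * Real.pi)) •
    ∫ t : ℝ, (Complex.exp (-(Complex.I * (ω : ℂ) * (t : ℂ))) * ((fG ς t : ℝ) : ℂ)) • heis H A t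

/-- The time-evolved operator Fourier transform `Â(ω, t)`. -/
def oft2 (H : Matrix m m ℂ) (ς : ℝ) (A : Matrix m m ℂ) (ω t : ℝ) : Matrix m m ℂ :=
  heis H (oft H ς A ω) t

/-- The shifted Metropolis weight `γ(ω)`. -/
def metro (β ς ω : ℝ) : ℝ := Real.exp (-(β * max (ω + β * ς^2 / 2) 0))

/-- The Dirichlet frequency filter `h(ω)`. -/
def hFil (β ς ω : ℝ) : ℝ := Real.exp (-(ς^2 * β^2 / 8)) * Real.exp (-(|ω| * β / 2))

/-- The Dirichlet time filter `g(t)`. -/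
def gFil (β t : ℝ) : ℝ := 1 / (β * Real.cosh (2 * Real.pi * t / β))

/-- The coherent-term time filter `c(t)`. -/
def cFil (β t : ℝ) : ℝ := 1 / (β * Real.sinh (2 * Real.pi * t / β))

/-- The `s`-weighted frequency filter `h_s(ω)`. -/
def hFilS (β ς s ω : ℝ) : ℝ :=
  Real.exp (s * β * (2 * ω - s * β * ς^2) / 2) * hFil β ς (ω - s * β * ς^2)

/-- The `s`-weighted time filter `g_s(t)`. -/
def gFilS (β s t : ℝ) : ℝ :=
  (2 / β) * (Real.cos (s * Real.pi) * Real.cosh (2 * Real.pi * t / β)) /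
    (Real.cosh (4 * Real.pi * t / β) + Real.cos (2 * s * Real.pi))

/-- The ADB time filter `g^{ADB}_s(t)`. -/
def gADB (β s t : ℝ) : ℝ :=
  (1 / (2 * Real.pi * β)) *
    Real.log ((Real.cosh (2 * Real.pi * t / β) + Real.cos (s * Real.pi)) /
      (Real.cosh (2 * Real.pi * t / β) - Real.cos (s * Real.pi)))

/-- The coherent term `C^a`. -/
def coherent (H : Matrix m m ℂ) (β ς : ℝ) (A : Matrix m m ℂ) : Matrix m m ℂ :=
  ∫ t : ℝ, ∫ ω : ℝ, ((metro β ς ω * cFil β t : ℝ)) • ((oft2 H ς A ω t)ᴴ * oft2 H ς A ω t)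

/-- The local (KMS detailed balanced) Lindbladian `L_a` with jump `A`. -/
def lindblad (H : Matrix m m ℂ) (β ς : ℝ) (A X : Matrix m m ℂ) : Matrix m m ℂ :=
  (-Complex.I) • (coherent H β ς A * X - X * coherent H β ς A) +
    ∫ ω : ℝ, (metro β ς ω : ℝ) •
      (oft H ς A ω * X * (oft H ς A ω)ᴴ -
        (2⁻¹ : ℂ) • ((oft H ς A ω)ᴴ * oft H ς A ω * X + X * ((oft H ς A ω)ᴴ * oft H ς A ω)))

/-- The Heisenberg picture (Hilbert-Schmidt adjoint) Lindbladian `L_a†`. -/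
def lindbladDag (H : Matrix m m ℂ) (β ς : ℝ) (A Y : Matrix m m ℂ) : Matrix m m ℂ :=
  Complex.I • (coherent H β ς A * Y - Y * coherent H β ς A) +
    ∫ ω : ℝ, (metro β ς ω : ℝ) •
      ((oft H ς A ω)ᴴ * Y * oft H ς A ω -
        (2⁻¹ : ℂ) • ((oft H ς A ω)ᴴ * oft H ς A ω * Y + Y * ((oft H ς A ω)ᴴ * oft H ς A ω)))

/-- The Hilbert-Schmidt adjoint of a superoperator. -/
def hsAdj (Φ : Matrix m m ℂ → Matrix m m ℂ) (Y : Matrix m m ℂ) : Matrix m m ℂ :=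
  ∑ a : m, ∑ b : m,
    (((Φ (Matrix.single a b 1))ᴴ * Y).trace) • Matrix.single a b 1

/-- A superoperator is trace preserving. -/
def TracePreserving (Φ : Matrix m m ℂ → Matrix m m ℂ) : Prop :=
  ∀ X, (Φ X).trace = X.trace

/-- A superoperator is completely positive. -/
def IsCP (Φ : Matrix m m ℂ → Matrix m m ℂ) : Prop :=
  ∀ (k : ℕ) (X : Matrix (m × Fin k) (m × Fin k) ℂ), X.PosSemidef →
    (Matrix.of fun p q : m × Fin k =>
      Φ (Matrix.of fun a b => X (a, p.2) (b, q.2)) p.1 q.1).PosSemidef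

/-- The exponential `e^{sL}` of a superoperator `L`. -/
def superExp (L : Matrix m m ℂ → Matrix m m ℂ) (s : ℝ) (X : Matrix m m ℂ) : Matrix m m ℂ :=
  ∑' k : ℕ, ((s ^ k / (Nat.factorial k) : ℝ)) • L^[k] X

/-- The time-averaging map `R_t[X] = (1/t) ∫₀ᵗ e^{sL}[X] ds`. -/
def timeAvg (L : Matrix m m ℂ → Matrix m m ℂ) (t : ℝ) (X : Matrix m m ℂ) : Matrix m m ℂ :=
  (1 / t) • ∫ s in (0 : ℝ)..t, superExp L s X

/-- The squared `(σ, s)`-weighted norm `‖X‖²_{σ,s} = Tr[X† σ^{1/2+s} X σ^{1/2-s}]`. -/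
def wNormSq (σ : Matrix m m ℂ) (s : ℝ) (X : Matrix m m ℂ) : ℝ :=
  ((Xᴴ * mpow σ (1/2 + s) * X * mpow σ (1/2 - s)).trace).re

/-- Approximate detailed balance error `ADB_a[σ]`. -/
def adb (H : Matrix m m ℂ) (β ς : ℝ) (A σ : Matrix m m ℂ) : ℝ :=
  ∫ t : ℝ, ∫ ω : ℝ,
    frobNormSq (oft2 H ς A ω t * msqrt σ -
        msqrt σ * mpow (gibbs H β) (-(1/2 : ℝ)) * oft2 H ς A ω t * mpow (gibbs H β) (1/2 : ℝ)) *
      metro β ς ω * gFil β t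

/-- The relative Fisher information `FI_a[σ‖ρ]`. -/
def fisherInfo (H : Matrix m m ℂ) (β ς : ℝ) (A σ : Matrix m m ℂ) : ℝ :=
  ∫ t : ℝ, ∫ ω : ℝ, ∫ s in (-(1/2) : ℝ)..(1/2 : ℝ),
    wNormSq σ s (oft2 H ς A ω t * (mlog σ - mlog (gibbs H β)) -
        (mlog σ - mlog (gibbs H β)) * oft2 H ς A ω t) *
      hFilS β ς s ω * gFilS β s t

/-- The set of Bohr frequencies of a Hermitian matrix. -/
def bohrSet {H : Matrix m m ℂ} (hH : H.IsHermitian) : Finset ℝ :=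
  Finset.image (fun p : m × m => hH.eigenvalues p.1 - hH.eigenvalues p.2) Finset.univ

/-- The Bohr-frequency component `X_ν`. -/
def bohrComp {H : Matrix m m ℂ} (hH : H.IsHermitian) (X : Matrix m m ℂ) (ν : ℝ) :
    Matrix m m ℂ :=
  (hH.eigenvectorUnitary : Matrix m m ℂ) *
    (Matrix.of fun i j =>
      @ite _ (hH.eigenvalues i - hH.eigenvalues j = ν) (Classical.dec _)
        ((star (hH.eigenvectorUnitary : Matrix m m ℂ) * X *
          (hH.eigenvectorUnitary : Matrix m m ℂ)) i j) 0) *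
    star (hH.eigenvectorUnitary : Matrix m m ℂ)

/- n-qubit machinery -/

/-- The single qubit Pauli matrices `I, X, Y, Z`. -/
def pauli1 : Fin 4 → Matrix (Fin 2) (Fin 2) ℂ :=
  ![1, !![0, 1; 1, 0], !![0, -Complex.I; Complex.I, 0], !![1, 0; 0, -1]]

/-- The Pauli string `⊗_i P_{p i}`. -/
def pauliString {n : ℕ} (p : Fin n → Fin 4) : Matrix (QIdx n) (QIdx n) ℂ :=
  Matrix.of fun x y => ∏ i, pauli1 (p i) (x i) (y i)

/-- The single-qubit Pauli `X_i, Y_i, Z_i` acting on qubit `i` of an `n`-qubit system. -/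
def sqPauli {n : ℕ} (i : Fin n) (k : Fin 3) : Matrix (QIdx n) (QIdx n) ℂ :=
  pauliString (fun j => if j = i then (⟨k.val + 1, by omega⟩ : Fin 4) else 0)

/-- Merge configurations on a region and its complement. -/
def merge {n : ℕ} (A : Finset (Fin n)) (u : {i : Fin n // i ∈ A} → Fin 2)
    (v : {i : Fin n // i ∉ A} → Fin 2) : QIdx n :=
  fun i => if h : i ∈ A then u ⟨i, h⟩ else v ⟨i, h⟩

/-- Restriction of a configuration to a region. -/
def restr {n : ℕ} (A : Finset (Fin n)) (x : QIdx n) : {i : Fin n // i ∈ A} → Fin 2 :=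
  fun i => x i.1

/-- Restriction of a configuration to the complement of a region. -/
def restrC {n : ℕ} (A : Finset (Fin n)) (x : QIdx n) : {i : Fin n // i ∉ A} → Fin 2 :=
  fun i => x i.1

/-- The partial trace onto region `A` (tracing out the complement). -/
def ptrace {n : ℕ} (A : Finset (Fin n)) (σ : Matrix (QIdx n) (QIdx n) ℂ) :
    Matrix ({i : Fin n // i ∈ A} → Fin 2) ({i : Fin n // i ∈ A} → Fin 2) ℂ :=
  Matrix.of fun a b => ∑ v : {i : Fin n // i ∉ A} → Fin 2, σ (merge A a v) (merge A b v)

/-- The partial trace onto the complement of region `A`. -/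
def ptraceC {n : ℕ} (A : Finset (Fin n)) (σ : Matrix (QIdx n) (QIdx n) ℂ) :
    Matrix ({i : Fin n // i ∉ A} → Fin 2) ({i : Fin n // i ∉ A} → Fin 2) ℂ :=
  Matrix.of fun u v => ∑ a : {i : Fin n // i ∈ A} → Fin 2, σ (merge A a u) (merge A a v)

/-- The mutual information `I(A : Ā)_σ = S(σ_A) + S(σ_Ā) - S(σ)`. -/
def mutualInfo {n : ℕ} (A : Finset (Fin n)) (σ : Matrix (QIdx n) (QIdx n) ℂ) : ℝ :=
  entropy (ptrace A σ) + entropy (ptraceC A σ) - entropy σ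

/-- The product state `σ_Ā ⊗ σ_A`, reindexed on the full system. -/
def prodState {n : ℕ} (A : Finset (Fin n)) (σ : Matrix (QIdx n) (QIdx n) ℂ) :
    Matrix (QIdx n) (QIdx n) ℂ :=
  Matrix.of fun x y =>
    ptrace A σ (restr A x) (restr A y) * ptraceC A σ (restrC A x) (restrC A y)

/-- Extension `N ⊗ id` of a superoperator on region `A` to the full system. -/
def actOnRegion {n : ℕ} (A : Finset (Fin n))
    (N : Matrix ({i : Fin n // i ∈ A} → Fin 2) ({i : Fin n // i ∈ A} → Fin 2) ℂ →
         Matrix ({i : Fin n // i ∈ A} → Fin 2) ({i : Fin n // i ∈ A} → Fin 2) ℂ)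
    (X : Matrix (QIdx n) (QIdx n) ℂ) : Matrix (QIdx n) (QIdx n) ℂ :=
  Matrix.of fun x y =>
    N (Matrix.of fun a b => X (merge A a (restrC A x)) (merge A b (restrC A y)))
      (restr A x) (restr A y)

/-- The sum of the local Lindbladians with single-qubit Pauli jumps in region `A`
(with Gaussian width `ς = 1/β`). -/
def lindbladRegion {n : ℕ} (H : Matrix (QIdx n) (QIdx n) ℂ) (β : ℝ) (A : Finset (Fin n))
    (X : Matrix (QIdx n) (QIdx n) ℂ) : Matrix (QIdx n) (QIdx n) ℂ :=
  ∑ i ∈ A, ∑ k : Fin 3, lindblad H β (1/β) (sqPauli i k) X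

/-- The full thermal Lindbladian `L = -i[H,·] + Σ_a L_a` with all single-qubit Pauli jumps
(with Gaussian width `ς = 1/β`). -/
def fullLindblad {n : ℕ} (H : Matrix (QIdx n) (QIdx n) ℂ) (β : ℝ)
    (X : Matrix (QIdx n) (QIdx n) ℂ) : Matrix (QIdx n) (QIdx n) ℂ :=
  (-Complex.I) • (H * X - X * H) + ∑ i : Fin n, ∑ k : Fin 3, lindblad H β (1/β) (sqPauli i k) X

/-- A matrix on `n` qubits is supported on the set `S` of qubits. -/
def SupportedOn {n : ℕ} (S : Finset (Fin n)) (M : Matrix (QIdx n) (QIdx n) ℂ) : Prop :=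
  (∀ x y : QIdx n, (∃ i, i ∉ S ∧ x i ≠ y i) → M x y = 0) ∧
  (∀ x y x' y' : QIdx n, (∀ i ∈ S, x i = x' i) → (∀ i ∈ S, y i = y' i) →
    (∀ i, i ∉ S → x i = y i) → (∀ i, i ∉ S → x' i = y' i) → M x y = M x' y')

end QMS

/-! Since `cosh 2u + cos 2a = 2 (sinh² u + cos² a)`, the filter `g_s` is the derivative of
`t ↦ arctan (sinh (2πt/β) / cos (sπ)) / (2π)`, which rises from `-1/4` to `1/4`. As `g_s ≥ 0`,
this bounded primitive also makes `g_s` integrable, and the integral is the difference of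
the two limits. -/

open Filter Topology

theorem MeasureTheory.integrable_of_hasDerivAt_of_nonneg {g g' : ℝ → ℝ} {a b : ℝ}
    (hderiv : ∀ x, HasDerivAt g (g' x) x) (hg' : ∀ x, 0 ≤ g' x)
    (hbot : Tendsto g atBot (𝓝 a)) (htop : Tendsto g atTop (𝓝 b)) : Integrable g' := by
  have hint : ∀ x y : ℝ, IntervalIntegrable g' volume x y := fun x y =>
    intervalIntegral.intervalIntegrable_deriv_of_nonneg
      (fun z _ => (hderiv z).continuousAt.continuousWithinAt) (fun z _ => hderiv z)
      (fun z _ => hg' z)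
  refine integrable_of_intervalIntegral_norm_tendsto (b - a) (fun x => (hint (-x) x).1)
    tendsto_neg_atTop_atBot tendsto_id ?_
  have hnorm : ∀ x : ℝ, ∫ y in -x..x, ‖g' y‖ = g x - g (-x) := fun x => by
    simp only [Real.norm_of_nonneg (hg' _)]
    exact intervalIntegral.integral_eq_sub_of_hasDerivAt (fun y _ => hderiv y) (hint _ _)
  simp only [hnorm]
  exact htop.sub (hbot.comp tendsto_neg_atTop_atBot)

namespace Real

theorem cosh_two_mul_add_cos_two_mul (x y : ℝ) :
    cosh (2 * x) + cos (2 * y) = 2 * (sinh x ^ 2 + cos y ^ 2) := by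
  rw [cosh_two_mul, cos_two_mul, cosh_sq]
  ring

theorem tendsto_sinh_atTop : Tendsto sinh atTop atTop :=
  tendsto_atTop_mono' _ ((eventually_ge_atTop 0).mono fun _ => self_le_sinh_iff.mpr) tendsto_id

theorem tendsto_sinh_atBot : Tendsto sinh atBot atBot := by
  refine (tendsto_neg_atTop_atBot.comp (tendsto_sinh_atTop.comp tendsto_neg_atBot_atTop)).congr ?_
  simp

theorem hasDerivAt_arctan_sinh_div {c : ℝ} (hc : c ≠ 0) (x : ℝ) :
    HasDerivAt (fun x => arctan (sinh x / c)) (c * cosh x / (sinh x ^ 2 + c ^ 2)) x := by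
  convert ((hasDerivAt_sinh x).div_const c).arctan using 1
  field_simp
  ring

variable {c : ℝ}

theorem tendsto_arctan_sinh_div_atTop (hc : 0 < c) :
    Tendsto (fun x => arctan (sinh x / c)) atTop (𝓝 (π / 2)) :=
  (tendsto_arctan_atTop.mono_right nhdsWithin_le_nhds).comp
    (tendsto_sinh_atTop.atTop_div_const hc)

theorem tendsto_arctan_sinh_div_atBot (hc : 0 < c) :
    Tendsto (fun x => arctan (sinh x / c)) atBot (𝓝 (-(π / 2))) :=
  (tendsto_arctan_atBot.mono_right nhdsWithin_le_nhds).comp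
    (tendsto_sinh_atBot.atBot_div_const hc)

end Real

namespace QMS

open Real

section

variable {β s : ℝ}

theorem gFilS_eq (t : ℝ) :
    gFilS β s t = cos (s * π) * cosh (2 * π * t / β) /
      (sinh (2 * π * t / β) ^ 2 + cos (s * π) ^ 2) / β := by
  have h4 : 4 * π * t / β = 2 * (2 * π * t / β) := by ring
  have h2 : 2 * s * π = 2 * (s * π) := by ring
  rw [gFilS, h4, h2, cosh_two_mul_add_cos_two_mul, mul_comm 2 (_ + _), ← div_div]
  ring

theorem gFilS_nonneg (hβ : 0 ≤ β) (hc : 0 ≤ cos (s * π)) (t : ℝ) : 0 ≤ gFilS β s t := by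
  rw [gFilS_eq]
  positivity

theorem hasDerivAt_gFilS_primitive (hβ : β ≠ 0) (hc : cos (s * π) ≠ 0) (t : ℝ) :
    HasDerivAt (fun t => arctan (sinh (2 * π * t / β) / cos (s * π)) / (2 * π))
      (gFilS β s t) t := by
  have hu : HasDerivAt (fun t => 2 * π * t / β) (2 * π / β) t := by
    simpa using ((hasDerivAt_id t).const_mul (2 * π)).div_const β
  refine (((hasDerivAt_arctan_sinh_div hc _).comp t hu).div_const (2 * π)).congr_deriv ?_
  rw [gFilS_eq]
  field_simp [pi_ne_zero]

end

/-- The `s`-weighted time filter integrates to `1/2`. -/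
theorem gFilS_integral (β : ℝ) (hβ : 0 < β) (s : ℝ)
    (hs : s ∈ Set.Ioo (-(1/2) : ℝ) (1/2 : ℝ)) :
    ∫ t : ℝ, gFilS β s t = 1/2 := by
  obtain ⟨hs₁, hs₂⟩ := hs
  have hc : 0 < cos (s * π) := cos_pos_of_mem_Ioo ⟨by nlinarith [pi_pos], by nlinarith [pi_pos]⟩
  have hu_top : Tendsto (fun t => 2 * π * t / β) atTop atTop :=
    (tendsto_id.const_mul_atTop two_pi_pos).atTop_div_const hβ
  have hu_bot : Tendsto (fun t => 2 * π * t / β) atBot atBot :=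
    (tendsto_id.const_mul_atBot two_pi_pos).atBot_div_const hβ
  have htop := ((tendsto_arctan_sinh_div_atTop hc).comp hu_top).div_const (2 * π)
  have hbot := ((tendsto_arctan_sinh_div_atBot hc).comp hu_bot).div_const (2 * π)
  have hderiv := hasDerivAt_gFilS_primitive hβ.ne' hc.ne'
  have hint := integrable_of_hasDerivAt_of_nonneg hderiv (gFilS_nonneg hβ.le hc.le) hbot htop
  rw [integral_of_hasDerivAt_of_tendsto hderiv hint hbot htop]
  field_simp [pi_ne_zero]
  ring

end QMS
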